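/- arXiv:2512.19104 — 2 statements merged into one kernel-verified Lean document; each statement's English description precedes it below -/
import Mathlib

section
/- Let Δ_t, b, c be nonnegative reals satisfying Δ_{t+1} ≤ (b/(t(t-1)))·√(∑_{i=2}^{t} (i-1)² Δ_i) + c/t for all t ≥ 2. Then for any a ≥ 9b²/4 + 3c with Δ_2 ≤ a/2, it holds that Δ_t ≤ a/t for all t ≥ 2. -/
/-!
Strong induction on `t`. If `Δ i ≤ a / i` for `2 ≤ i ≤ t`, then `(i - 1)² Δ i ≤ a (i - 1)`, so the
weighted sum is at most `a t (t - 1) / 2` and the recursion gives `Δ (t + 1) ≤ (b √a + c) / t`.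
By AM-GM, `b √a ≤ 3 b² / 4 + a / 3`, so `b √a + c ≤ 2 a / 3`, and `2 a / (3 t) ≤ a / (t + 1)` for `t ≥ 2`.
-/

open Finset

lemma sum_Icc_two_cast_sub_one (t : ℕ) :
    ∑ i ∈ Icc 2 t, ((i : ℝ) - 1) = t * (t - 1) / 2 := by
  induction t with
  | zero => simp
  | succ n ih =>
    rcases n.eq_zero_or_pos with rfl | hn
    · simp
    · rw [sum_Icc_succ_top (by omega), ih]
      push_cast
      ring

lemma sum_Icc_two_sq_mul_le {Δ : ℕ → ℝ} {a : ℝ} (ha : 0 ≤ a) (t : ℕ)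
    (hΔ : ∀ i ∈ Icc 2 t, Δ i ≤ a / i) :
    ∑ i ∈ Icc 2 t, ((i : ℝ) - 1) ^ 2 * Δ i ≤ a * (t * (t - 1) / 2) := by
  rw [← sum_Icc_two_cast_sub_one, mul_sum]
  refine sum_le_sum fun i hi => ?_
  have hi2 : (2 : ℝ) ≤ i := by exact_mod_cast (mem_Icc.1 hi).1
  calc ((i : ℝ) - 1) ^ 2 * Δ i ≤ ((i : ℝ) - 1) ^ 2 * (a / i) :=
        mul_le_mul_of_nonneg_left (hΔ i hi) (sq_nonneg _)
    _ ≤ a * ((i : ℝ) - 1) := by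
        rw [mul_div_assoc', div_le_iff₀ (by linarith)]
        nlinarith

lemma div_mul_sqrt_le {a b S t : ℝ} (ha : 0 ≤ a) (hb : 0 ≤ b) (ht : 2 ≤ t)
    (hS : S ≤ a * (t * (t - 1) / 2)) :
    b / (t * (t - 1)) * √S ≤ b * √a / t := by
  have hsqrt : √S ≤ √a * (t - 1) :=
    calc √S ≤ √(a * (t - 1) ^ 2) :=
          Real.sqrt_le_sqrt (hS.trans (mul_le_mul_of_nonneg_left (by nlinarith) ha))
      _ = √a * (t - 1) := by rw [Real.sqrt_mul ha, Real.sqrt_sq (by linarith)]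
  calc b / (t * (t - 1)) * √S ≤ b / (t * (t - 1)) * (√a * (t - 1)) :=
        mul_le_mul_of_nonneg_left hsqrt (div_nonneg hb (by nlinarith))
    _ = b * √a / t := by
        field_simp [(by linarith : t - 1 ≠ 0)]

lemma mul_sqrt_add_le {a b c : ℝ} (ha : 0 ≤ a) (habc : 9 * b ^ 2 / 4 + 3 * c ≤ a) :
    b * √a + c ≤ 2 * a / 3 := by
  nlinarith [sq_nonneg (3 * b - 2 * √a), Real.sq_sqrt ha]

lemma div_mul_sqrt_add_div_le {a b c S t : ℝ} (hb : 0 ≤ b) (hc : 0 ≤ c)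
    (habc : 9 * b ^ 2 / 4 + 3 * c ≤ a) (ht : 2 ≤ t) (hS : S ≤ a * (t * (t - 1) / 2)) :
    b / (t * (t - 1)) * √S + c / t ≤ a / (t + 1) := by
  have ha : 0 ≤ a := by nlinarith
  calc b / (t * (t - 1)) * √S + c / t ≤ (b * √a + c) / t := by
        rw [add_div]
        gcongr
        exact div_mul_sqrt_le ha hb ht hS
    _ ≤ 2 * a / 3 / t := by gcongr; exact mul_sqrt_add_le ha habc
    _ ≤ a / (t + 1) := by
        rw [div_div, div_le_div_iff₀ (by positivity) (by positivity)]
        nlinarith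

theorem stmt_10_general (Δ : ℕ → ℝ) (b c : ℝ)
    (hb : 0 ≤ b) (hc : 0 ≤ c)
    (hrec : ∀ t : ℕ, 2 ≤ t →
      Δ (t + 1) ≤ b / ((t : ℝ) * ((t : ℝ) - 1))
          * Real.sqrt (∑ i ∈ Finset.Icc 2 t, ((i : ℝ) - 1) ^ 2 * Δ i)
        + c / (t : ℝ)) :
    ∀ a : ℝ, 9 * b ^ 2 / 4 + 3 * c ≤ a → Δ 2 ≤ a / 2 →
      ∀ t : ℕ, 2 ≤ t → Δ t ≤ a / (t : ℝ) := by
  intro a habc hΔ2 t ht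
  have ha : 0 ≤ a := by nlinarith
  induction t using Nat.strong_induction_on with
  | _ t ih =>
    rcases ht.eq_or_lt with rfl | ht
    · exact_mod_cast hΔ2
    · obtain ⟨n, rfl⟩ : ∃ n, t = n + 1 := ⟨t - 1, by omega⟩
      have hn : 2 ≤ n := by omega
      have hS := sum_Icc_two_sq_mul_le ha n fun i hi =>
        ih i (by grind) (mem_Icc.1 hi).1
      push_cast
      exact (hrec n hn).trans
        (div_mul_sqrt_add_div_le hb hc habc (by exact_mod_cast hn) hS)

theorem stmt_10 (Δ : ℕ → ℝ) (b c : ℝ)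
    (hΔ : ∀ t, 0 ≤ Δ t) (hb : 0 ≤ b) (hc : 0 ≤ c)
    (hrec : ∀ t : ℕ, 2 ≤ t →
      Δ (t + 1) ≤ b / ((t : ℝ) * ((t : ℝ) - 1))
          * Real.sqrt (∑ i ∈ Finset.Icc 2 t, ((i : ℝ) - 1) ^ 2 * Δ i)
        + c / (t : ℝ)) :
    ∀ a : ℝ, 9 * b ^ 2 / 4 + 3 * c ≤ a → Δ 2 ≤ a / 2 →
      ∀ t : ℕ, 2 ≤ t → Δ t ≤ a / (t : ℝ) :=
  stmt_10_general Δ b c hb hc hrec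
end

section
/- Let a_1 ≤ a_2 ≤ … ≤ a_N be real numbers and let b_1, …, b_N satisfy |b_k - a_{σ(k)}| ≤ ε for some permutation σ and all k, where the b's are sorted: b_1 ≤ … ≤ b_N. Suppose J is the set of indices of the N/4 smallest b-values and I the set of indices of the N/4 smallest a-values. Then ∑_{i∈I} a_i ≤ ∑_{j∈J} a_j ≤ ∑_{i∈I} a_i + (N/2)·(2ε). -/
/-! The `σ`-image of the first `N / 4` indices is some `N / 4`-element set, and for monotone `a`
no such set has a smaller `a`-sum than the initial segment. Conversely, a pigeonhole argument
gives `a (σ k) ≤ a k + 2ε` for every `k`, and there are `N / 4 ≤ N / 2` summands. -/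

open Finset Function

theorem Fin.val_le_val_apply_of_strictMono {m N : ℕ} {f : Fin m → Fin N} (hf : StrictMono f)
    (i : Fin m) : (i : ℕ) ≤ f i := by
  have hsub : (Iic i).image f ⊆ Iic (f i) := by
    simp only [subset_iff, mem_image, mem_Iic, forall_exists_index, and_imp]
    rintro _ j hj rfl
    exact hf.monotone hj
  have := card_le_card hsub
  rw [card_image_of_injective _ hf.injective, Fin.card_Iic, Fin.card_Iic] at this
  omega

theorem Fin.sum_filter_val_lt_le_sum_of_card_eq {N m : ℕ} {β : Type*} [AddCommMonoid β]
    [PartialOrder β] [IsOrderedAddMonoid β] {a : Fin N → β} (ha : Monotone a)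
    {S : Finset (Fin N)} (hS : #S = m) :
    ∑ k ∈ univ.filter (fun k : Fin N => (k : ℕ) < m), a k ≤ ∑ s ∈ S, a s := by
  have hm : m ≤ N := hS ▸ (card_le_univ S).trans_eq (Fintype.card_fin N)
  have hinit : univ.map (Fin.castLEEmb hm) = univ.filter (fun k : Fin N => (k : ℕ) < m) := by
    ext k
    simp only [mem_map, mem_univ, true_and, mem_filter]
    exact ⟨by rintro ⟨i, rfl⟩; exact i.isLt, fun hk => ⟨⟨k, hk⟩, rfl⟩⟩
  set f := S.orderEmbOfFin hS
  calc ∑ k ∈ univ.filter (fun k : Fin N => (k : ℕ) < m), a k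
      = ∑ i : Fin m, a (Fin.castLE hm i) := by rw [← hinit, sum_map]; rfl
    _ ≤ ∑ i : Fin m, a (f i) :=
        sum_le_sum fun i _ => ha (Fin.val_le_val_apply_of_strictMono f.strictMono i)
    _ = ∑ s ∈ S, a s := by rw [← map_orderEmbOfFin_univ S hS, sum_map]; rfl

theorem Function.Injective.exists_ge_apply_le {α : Type*} [LinearOrder α]
    [LocallyFiniteOrderTop α] {f : α → α} (hf : Injective f) (k : α) :
    ∃ j, k ≤ j ∧ f j ≤ k := by
  by_contra! h
  have hle : #(Ici k) ≤ #(Ioi k) :=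
    card_le_card_of_injOn f (fun j hj => mem_Ioi.2 (h j (mem_Ici.1 hj))) hf.injOn
  have hpos : 0 < #(Ici k) := nonempty_Ici.card_pos
  have := card_Ioi_eq_card_Ici_sub_one k
  omega

-- Some `j ≥ k` is sent by `σ` to `σ j ≤ k`, so `b k ≤ b j ≤ a (σ j) + ε ≤ a k + ε`.
theorem Monotone.apply_le_add_two_mul_of_abs_sub_comp_le {α : Type*} [LinearOrder α]
    [LocallyFiniteOrderTop α] {a b : α → ℝ} (ha : Monotone a) (hb : Monotone b) {σ : α → α}
    (hσ : Injective σ) {ε : ℝ} (hclose : ∀ k, |b k - a (σ k)| ≤ ε) (k : α) :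
    a (σ k) ≤ a k + 2 * ε := by
  obtain ⟨j, hkj, hσj⟩ := hσ.exists_ge_apply_le k
  have hk := abs_le.1 (hclose k)
  have hj := abs_le.1 (hclose j)
  linarith [hb hkj, ha hσj]

theorem stmt_13_general (N : ℕ) (a b : Fin N → ℝ) (σ : Equiv.Perm (Fin N))
    (ε : ℝ) (hε : 0 < ε)
    (ha : Monotone a) (hb : Monotone b)
    (hclose : ∀ k : Fin N, |b k - a (σ k)| ≤ ε) :
    (∑ k ∈ Finset.univ.filter (fun k : Fin N => (k : ℕ) < N / 4), a k)
        ≤ (∑ k ∈ Finset.univ.filter (fun k : Fin N => (k : ℕ) < N / 4), a (σ k))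
      ∧ (∑ k ∈ Finset.univ.filter (fun k : Fin N => (k : ℕ) < N / 4), a (σ k))
        ≤ (∑ k ∈ Finset.univ.filter (fun k : Fin N => (k : ℕ) < N / 4), a k)
          + ((N : ℝ) / 2) * (2 * ε) := by
  set F := univ.filter (fun k : Fin N => (k : ℕ) < N / 4)
  have hF : #F = N / 4 := by
    rw [Fin.card_filter_val_lt, min_eq_right (Nat.div_le_self N 4)]
  have hFN : (#F : ℝ) ≤ N / 2 := by
    rw [hF]
    linarith [Nat.cast_div_le (α := ℝ) (m := N) (n := 4), Nat.cast_nonneg (α := ℝ) N]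
  refine ⟨?_, ?_⟩
  · exact (Fin.sum_filter_val_lt_le_sum_of_card_eq ha (S := F.map σ.toEmbedding)
      (by rw [card_map, hF])).trans_eq (sum_map _ _ _)
  · calc ∑ k ∈ F, a (σ k)
        ≤ ∑ k ∈ F, (a k + 2 * ε) := sum_le_sum fun k _ =>
          ha.apply_le_add_two_mul_of_abs_sub_comp_le hb σ.injective hclose k
      _ = ∑ k ∈ F, a k + #F * (2 * ε) := by rw [sum_add_distrib, sum_const, nsmul_eq_mul]
      _ ≤ ∑ k ∈ F, a k + N / 2 * (2 * ε) := by gcongr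

theorem stmt_13 (N : ℕ) (hN : 4 ∣ N) (a b : Fin N → ℝ) (σ : Equiv.Perm (Fin N))
    (ε : ℝ) (hε : 0 < ε)
    (ha : Monotone a) (hb : Monotone b)
    (hclose : ∀ k : Fin N, |b k - a (σ k)| ≤ ε) :
    (∑ k ∈ Finset.univ.filter (fun k : Fin N => (k : ℕ) < N / 4), a k)
        ≤ (∑ k ∈ Finset.univ.filter (fun k : Fin N => (k : ℕ) < N / 4), a (σ k))
      ∧ (∑ k ∈ Finset.univ.filter (fun k : Fin N => (k : ℕ) < N / 4), a (σ k))
        ≤ (∑ k ∈ Finset.univ.filter (fun k : Fin N => (k : ℕ) < N / 4), a k)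
          + ((N : ℝ) / 2) * (2 * ε) :=
  stmt_13_general N a b σ ε hε ha hb hclose
end
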